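/- Let G be a group and M, N powerfully embedded normal subgroups of G (G a finite p-group). Then [N^{p^i}, M^{p^j}] = [N, M]^{p^{i+j}} for all nonnegative integers i, j. -/

import Mathlib

/-- The subgroup generated by `k`-th powers of elements of `N`. -/
def sPow {G : Type*} [Group G] (N : Subgroup G) (k : ℕ) : Subgroup G :=
  Subgroup.closure ((· ^ k) '' (N : Set G))

/-- `K` is powerfully embedded in the finite `p`-group `G`:
`[K,G] ≤ K^p` for `p` odd, `[K,G] ≤ K^4` for `p = 2`. -/
def PowerfullyEmbedded (p : ℕ) {G : Type*} [Group G] (K : Subgroup G) : Prop :=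
  ⁅K, (⊤ : Subgroup G)⁆ ≤ sPow K (if p = 2 then 4 else p)

/-!
The core case is `⁅N^p, M⁆ = ⁅N, M⁆^p`. Its two inclusions, the fact that `N^p` is again powerfully
embedded, and for `p = 2` the inclusion `⁅N^4, M⁆ ≤ ⁅N, M⁆^4` are proved by induction on `|G|`:
each statement passes to the proper quotients `G ⧸ W`, so in a minimal counterexample a suitable
commutator subgroup lies in every nontrivial normal subgroup and is therefore central of exponent
`p`. There the class-two formulas `⁅x^k, g⁆ = ⁅x, ⁅x, g⁆⁆ ^ (k choose 2) * ⁅x, g⁆ ^ k` and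
`(a * b)^n = ⁅b, a⁆ ^ (n choose 2) * a^n * b^n` settle the question, since `p ∣ p choose 2` for odd
`p`. The three subgroups lemma then shows that `⁅N, M⁆` is powerfully embedded. Powerful embedding
also makes every element of `(N^(p^i))^p` a `p`-th power of an element of `N^(p^i)`, so
`(N^(p^i))^(p^j) = N^(p^(i+j))`, and the theorem follows by induction on `i` and `j`.
-/

universe u

open Subgroup
open scoped commutatorElement

section sPow

variable {G : Type*} [Group G] {N K : Subgroup G} {k : ℕ}

theorem pow_mem_sPow {x : G} (hx : x ∈ N) (k : ℕ) : x ^ k ∈ sPow N k :=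
  subset_closure ⟨x, hx, rfl⟩

theorem sPow_le (h : ∀ x ∈ N, x ^ k ∈ K) : sPow N k ≤ K :=
  (closure_le _).mpr <| by rintro _ ⟨x, hx, rfl⟩; exact h x hx

theorem sPow_le_self (N : Subgroup G) (k : ℕ) : sPow N k ≤ N :=
  sPow_le fun _ hx => pow_mem hx k

theorem sPow_one (N : Subgroup G) : sPow N 1 = N :=
  le_antisymm (sPow_le_self N 1) fun x hx => by simpa using pow_mem_sPow hx 1

theorem sPow_mono (h : N ≤ K) (k : ℕ) : sPow N k ≤ sPow K k :=
  sPow_le fun _ hx => pow_mem_sPow (h hx) k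

theorem sPow_mul_le (N : Subgroup G) (a b : ℕ) : sPow N (a * b) ≤ sPow (sPow N a) b :=
  sPow_le fun x hx => pow_mul x a b ▸ pow_mem_sPow (pow_mem_sPow hx a) b

theorem sPow_le_sPow_of_dvd {a b : ℕ} (h : a ∣ b) : sPow N b ≤ sPow N a := by
  obtain ⟨c, rfl⟩ := h
  exact sPow_le fun x hx => (pow_mul' x a c).symm ▸ pow_mem_sPow (pow_mem hx c) a

theorem map_sPow {G' : Type*} [Group G'] (f : G →* G') (N : Subgroup G) (k : ℕ) :
    (sPow N k).map f = sPow (N.map f) k := by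
  simp only [sPow, MonoidHom.map_closure, coe_map, Set.image_image, map_pow]

instance sPow_normal [hN : N.Normal] (k : ℕ) : (sPow N k).Normal := by
  refine ⟨fun x hx g => ?_⟩
  induction hx using closure_induction with
  | mem _ hy =>
    obtain ⟨n, hn, rfl⟩ := hy
    simpa only [conj_pow] using pow_mem_sPow (hN.conj_mem n hn g) k
  | one => simp
  | mul a b _ _ ha hb => simpa only [conj_mul] using mul_mem ha hb
  | inv a _ ha => simpa only [conj_inv] using inv_mem ha

theorem pow_mem_sPow_mul_of_commute {a : ℕ} (hcomm : ∀ x ∈ sPow N a, ∀ y ∈ sPow N a, Commute x y)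
    {c : G} (hc : c ∈ sPow N a) (b : ℕ) : c ^ b ∈ sPow N (a * b) := by
  induction hc using closure_induction with
  | mem _ hy => obtain ⟨x, hx, rfl⟩ := hy; simpa only [← pow_mul] using pow_mem_sPow hx (a * b)
  | one => simp
  | mul c d hc hd hcb hdb => simpa only [(hcomm c hc d hd).mul_pow] using mul_mem hcb hdb
  | inv c _ hcb => simpa only [inv_pow] using inv_mem hcb

theorem commutator_sPow_le {B C : Subgroup G} [hC : C.Normal]
    (h : ∀ x ∈ N, ∀ b ∈ B, ⁅x ^ k, b⁆ ∈ C) : ⁅sPow N k, B⁆ ≤ C := by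
  rw [commutator_le]
  intro a ha
  induction ha using closure_induction with
  | mem _ hy => obtain ⟨x, hx, rfl⟩ := hy; exact h x hx
  | one => simp
  | mul x y _ _ hx hy =>
    intro b hb
    rw [show ⁅x * y, b⁆ = x * ⁅y, b⁆ * x⁻¹ * ⁅x, b⁆ by group]
    exact mul_mem (hC.conj_mem _ (hy b hb) x) (hx b hb)
  | inv x _ hx =>
    intro b hb
    rw [show ⁅x⁻¹, b⁆ = x⁻¹ * ⁅x, b⁆⁻¹ * x⁻¹⁻¹ by group]
    exact hC.conj_mem _ (inv_mem (hx b hb)) x⁻¹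

end sPow

section ClassTwo

variable {G : Type*} [Group G]

theorem conj_pow_eq_of_commute {a b : G} (h : Commute ⁅b, a⁆ b) (m : ℕ) :
    b ^ m * a * (b ^ m)⁻¹ = ⁅b, a⁆ ^ m * a := by
  induction m with
  | zero => simp
  | succ m ih =>
    have hw : b * ⁅b, a⁆ ^ m * b⁻¹ = ⁅b, a⁆ ^ m := by rw [← (h.pow_left m).eq]; group
    have hba : b * a * b⁻¹ = ⁅b, a⁆ * a := by rw [commutatorElement_def]; group
    calc b ^ (m + 1) * a * (b ^ (m + 1))⁻¹ = b * (b ^ m * a * (b ^ m)⁻¹) * b⁻¹ := by group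
      _ = (b * ⁅b, a⁆ ^ m * b⁻¹) * (b * a * b⁻¹) := by rw [ih]; group
      _ = ⁅b, a⁆ ^ (m + 1) * a := by rw [hw, hba, pow_succ, mul_assoc]

theorem commutatorElement_pow_right_of_commute {a c : G} (h : Commute ⁅a, c⁆ c) (n : ℕ) :
    ⁅a, c ^ n⁆ = ⁅a, c⁆ ^ n := by
  have hconj : a * c * a⁻¹ = ⁅a, c⁆ * c := by rw [commutatorElement_def]; group
  rw [commutatorElement_def, ← conj_pow, hconj, h.mul_pow, mul_inv_cancel_right]

theorem commutatorElement_pow_left_of_commute {x g : G} (hx : Commute ⁅x, ⁅x, g⁆⁆ x)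
    (hc : Commute ⁅x, ⁅x, g⁆⁆ ⁅x, g⁆) (k : ℕ) :
    ⁅x ^ k, g⁆ = ⁅x, ⁅x, g⁆⁆ ^ k.choose 2 * ⁅x, g⁆ ^ k := by
  induction k with
  | zero => simp
  | succ k ih =>
    calc ⁅x ^ (k + 1), g⁆ = (x ^ k * ⁅x, g⁆ * (x ^ k)⁻¹) * ⁅x ^ k, g⁆ := by
          simp only [commutatorElement_def]; group
      _ = ⁅x, ⁅x, g⁆⁆ ^ k * (⁅x, g⁆ * ⁅x, ⁅x, g⁆⁆ ^ k.choose 2) * ⁅x, g⁆ ^ k := by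
          rw [conj_pow_eq_of_commute hx, ih]; group
      _ = ⁅x, ⁅x, g⁆⁆ ^ (k + 1).choose 2 * ⁅x, g⁆ ^ (k + 1) := by
          rw [← (hc.pow_left _).eq, Nat.choose_succ_succ, Nat.choose_one_right, pow_add, pow_succ']
          generalize ⁅x, ⁅x, g⁆⁆ = z
          generalize ⁅x, g⁆ = c
          group

theorem mul_pow_of_commute_commutatorElement {a b : G} (ha : Commute ⁅b, a⁆ a)
    (hb : Commute ⁅b, a⁆ b) (n : ℕ) : (a * b) ^ n = ⁅b, a⁆ ^ n.choose 2 * a ^ n * b ^ n := by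
  induction n with
  | zero => simp
  | succ n ih =>
    calc (a * b) ^ (n + 1)
      _ = ⁅b, a⁆ ^ n.choose 2 * a ^ n * (b ^ n * a * (b ^ n)⁻¹) * b ^ (n + 1) := by
          rw [pow_succ, ih]; group
      _ = ⁅b, a⁆ ^ n.choose 2 * (a ^ n * ⁅b, a⁆ ^ n) * a * b ^ (n + 1) := by
          rw [conj_pow_eq_of_commute hb]; group
      _ = ⁅b, a⁆ ^ (n + 1).choose 2 * a ^ (n + 1) * b ^ (n + 1) := by
          rw [← ((ha.pow_left n).pow_right n).eq, Nat.choose_succ_succ, Nat.choose_one_right,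
            add_comm, pow_add, pow_succ]
          generalize ⁅b, a⁆ = w
          group

theorem commutatorElement_mul_right_of_commute {a b κ : G} (h : Commute κ a) :
    ⁅a, b * κ⁆ = ⁅a, b⁆ := by
  calc a * (b * κ) * a⁻¹ * (b * κ)⁻¹ = a * b * (κ * a⁻¹) * κ⁻¹ * b⁻¹ := by group
    _ = a * b * a⁻¹ * b⁻¹ := by rw [h.inv_right.eq]; group

theorem pow_choose_two_mem {p : ℕ} (hp : p.Prime) (hp2 : p ≠ 2) {W : Subgroup G} {z : G}
    (hz : z ^ p ∈ W) : z ^ p.choose 2 ∈ W := by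
  obtain ⟨k, hk⟩ := hp.dvd_choose_self two_ne_zero (hp.two_le.lt_of_ne' hp2)
  rw [hk, pow_mul]
  exact pow_mem hz k

theorem pow_choose_two_eq_one {p : ℕ} (hp : p.Prime) (hp2 : p ≠ 2) {z : G} (hz : z ^ p = 1) :
    z ^ p.choose 2 = 1 :=
  mem_bot.mp (pow_choose_two_mem hp hp2 (mem_bot.mpr hz))

end ClassTwo

section PowersModNormal

variable {G : Type*} [Group G] {W : Subgroup G} [hW : W.Normal]

theorem exists_mul_pow_eq_mul_of_commutatorElement_mem {x u : G} (n : ℕ)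
    (hc : ∀ g, ⁅⁅u, x⁆, g⁆ ∈ W) (hw : ⁅u, x⁆ ^ n.choose 2 ∈ W) :
    ∃ s ∈ W, (x * u) ^ n = x ^ n * u ^ n * s := by
  have hmk (a b : G) : ((⁅a, b⁆ : G) : G ⧸ W) = ⁅(a : G ⧸ W), (b : G ⧸ W)⁆ :=
    map_commutatorElement (QuotientGroup.mk' W) a b
  have hcomm : ∀ y : G ⧸ W, Commute ⁅(u : G ⧸ W), (x : G ⧸ W)⁆ y := by
    intro y
    obtain ⟨g, rfl⟩ := QuotientGroup.mk_surjective y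
    rw [← commutatorElement_eq_one_iff_commute, ← hmk, ← hmk, QuotientGroup.eq_one_iff]
    exact hc g
  have key : (((x * u) ^ n : G) : G ⧸ W) = ((x ^ n * u ^ n : G) : G ⧸ W) := by
    rw [QuotientGroup.mk_pow, QuotientGroup.mk_mul,
      mul_pow_of_commute_commutatorElement (hcomm _) (hcomm _), ← hmk,
      ← QuotientGroup.mk_pow, (QuotientGroup.eq_one_iff _).mpr hw, one_mul]
    rfl
  exact ⟨_, QuotientGroup.eq.mp key.symm, by group⟩

theorem exists_eq_pow_mul_of_mem_sPow {C : Subgroup G} {n : ℕ}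
    (h : ∀ u ∈ C, ∀ v ∈ C, ∃ s ∈ W, (u * v) ^ n = u ^ n * v ^ n * s) {e : G}
    (he : e ∈ sPow C n) : ∃ c ∈ C, ∃ s ∈ W, e = c ^ n * s := by
  induction he using closure_induction with
  | mem _ hy => obtain ⟨x, hx, rfl⟩ := hy; exact ⟨x, hx, 1, one_mem W, (mul_one _).symm⟩
  | one => exact ⟨1, one_mem C, 1, one_mem W, by simp⟩
  | mul _ _ _ _ h₁ h₂ =>
    obtain ⟨c₁, hc₁, s₁, hs₁, rfl⟩ := h₁
    obtain ⟨c₂, hc₂, s₂, hs₂, rfl⟩ := h₂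
    obtain ⟨s, hs, hpow⟩ := h c₁ hc₁ c₂ hc₂
    refine ⟨c₁ * c₂, mul_mem hc₁ hc₂, s⁻¹ * ((c₂ ^ n)⁻¹ * s₁ * (c₂ ^ n)⁻¹⁻¹) * s₂,
      mul_mem (mul_mem (inv_mem hs) (hW.conj_mem _ hs₁ _)) hs₂, ?_⟩
    rw [hpow]; group
  | inv _ _ h₁ =>
    obtain ⟨c, hc, s, hs, rfl⟩ := h₁
    exact ⟨c⁻¹, inv_mem hc, c ^ n * s⁻¹ * (c ^ n)⁻¹, hW.conj_mem _ (inv_mem hs) _, by group⟩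

end PowersModNormal

theorem Subgroup.normal_of_le_center {G : Type*} [Group G] {H : Subgroup G}
    (h : H ≤ center G) : H.Normal :=
  ⟨fun z hz g => by rwa [mem_center_iff.mp (h hz) g, mul_inv_cancel_right]⟩

theorem Group.induction_on_quotients {P : ∀ (G : Type u) [Group G], Prop}
    (step : ∀ (G : Type u) [Group G] [Finite G],
      (∀ (W : Subgroup G) [W.Normal], W ≠ ⊥ → P (G ⧸ W)) → P G)
    (G : Type u) [Group G] [Finite G] : P G := by
  induction h : Nat.card G using Nat.strong_induction_on generalizing G with
  | _ n ih =>
    refine step G fun W _ hW => ih _ ?_ (G ⧸ W) rfl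
    rw [← h, card_eq_card_quotient_mul_card_subgroup W]
    exact lt_mul_of_one_lt_right Nat.card_pos (W.one_lt_card_iff_ne_bot.mpr hW)

theorem Subgroup.le_sup_of_map_mk'_le {G : Type*} [Group G] {A B W : Subgroup G} [W.Normal]
    (h : A.map (QuotientGroup.mk' W) ≤ B.map (QuotientGroup.mk' W)) : A ≤ B ⊔ W := by
  rwa [map_le_map_iff, QuotientGroup.ker_mk'] at h

theorem Subgroup.commutator_commutator_le_of_rotate {G : Type*} [Group G]
    {H₁ H₂ H₃ W : Subgroup G} [W.Normal] (h₁ : ⁅⁅H₂, H₃⁆, H₁⁆ ≤ W) (h₂ : ⁅⁅H₃, H₁⁆, H₂⁆ ≤ W) :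
    ⁅⁅H₁, H₂⁆, H₃⁆ ≤ W := by
  have hbot (A B C : Subgroup G) : ⁅⁅A, B⁆, C⁆ ≤ W ↔
      ⁅⁅A.map (QuotientGroup.mk' W), B.map (QuotientGroup.mk' W)⁆,
        C.map (QuotientGroup.mk' W)⁆ = ⊥ := by
    rw [← map_commutator, ← map_commutator, map_eq_bot_iff, QuotientGroup.ker_mk']
  rw [hbot] at h₁ h₂ ⊢
  exact commutator_commutator_eq_bot_of_rotate h₁ h₂

namespace IsPGroup

variable {p : ℕ} {G : Type*} [Group G] [Finite G]

theorem le_center_of_forall_le (hp : p.Prime) (hG : IsPGroup p G) {K : Subgroup G}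
    (hK : ∀ W : Subgroup G, W.Normal → W ≠ ⊥ → K ≤ W) : K ≤ center G := by
  have := Fact.mk hp
  rcases subsingleton_or_nontrivial G with _ | _
  · exact fun z _ => Subsingleton.elim z 1 ▸ one_mem _
  · exact hK _ inferInstance hG.bot_lt_center.ne'

theorem pow_eq_one_of_forall_le (hp : p.Prime) (hG : IsPGroup p G) {K : Subgroup G}
    (hK : ∀ W : Subgroup G, W.Normal → W ≠ ⊥ → K ≤ W) {z : G} (hz : z ∈ K) : z ^ p = 1 := by
  have := Fact.mk hp
  obtain rfl | hKne := eq_or_ne K ⊥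
  · rw [mem_bot.mp hz, one_pow]
  have : Nontrivial K := (nontrivial_iff_ne_bot K).mpr hKne
  obtain ⟨w, hw⟩ := exists_prime_orderOf_dvd_card' p
    (((hG.to_subgroup K).card_eq_or_dvd).resolve_left Finite.one_lt_card.ne')
  have hwp : (w : G) ^ p = 1 := by rw [← coe_pow, ← hw, pow_orderOf_eq_one, coe_one]
  have hzw : z ∈ zpowers (w : G) := by
    refine hK _ (normal_of_le_center ?_) ?_ hz
    · exact zpowers_le.mpr (le_center_of_forall_le hp hG hK w.2)
    · rw [Ne, zpowers_eq_bot, ← coe_one, Subtype.coe_inj, ← orderOf_eq_one_iff, hw]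
      exact hp.one_lt.ne'
  obtain ⟨m, rfl⟩ := mem_zpowers_iff.mp hzw
  rw [← zpow_natCast, ← zpow_mul, mul_comm, zpow_mul, zpow_natCast, hwp, one_zpow]

theorem eq_bot_of_le_commutator_top (hp : p.Prime) (hG : IsPGroup p G) {K : Subgroup G}
    (h : K ≤ ⁅K, ⊤⁆) : K = ⊥ := by
  have := Fact.mk hp
  obtain ⟨n, hn⟩ := Subgroup.nilpotent_iff_lowerCentralSeries.mp hG.isNilpotent
  have hK : ∀ m, K ≤ (⊤ : Subgroup G).lowerCentralSeries m := fun m => by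
    induction m with
    | zero => exact le_top
    | succ m ih => exact h.trans (commutator_mono ih le_rfl)
  exact le_bot_iff.mp (hn ▸ hK n)

/-- Modulo `⁅K, ⊤⁆` the `p`-th power map is multiplicative on `K`, so if `p`-th powers generate
`K`, then every element of `K` is a `p ^ j`-th power modulo `⁅K, ⊤⁆` for all `j`. -/
theorem eq_bot_of_sPow_eq_self (hp : p.Prime) (hG : IsPGroup p G) {K : Subgroup G} [K.Normal]
    (h : sPow K p = K) : K = ⊥ := by
  set W := ⁅K, (⊤ : Subgroup G)⁆
  have hWK : W ≤ K := commutator_le_left K ⊤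
  have hmulpow (n : ℕ) : ∀ x ∈ K, ∀ u ∈ K, ∃ s ∈ W, (x * u) ^ n = x ^ n * u ^ n * s :=
    fun x _ u hu => exists_mul_pow_eq_mul_of_commutatorElement_mem n
      (fun g => commutator_le_left W ⊤ (commutator_mem_commutator
        (commutator_mem_commutator hu (mem_top x)) (mem_top g)))
      (pow_mem (commutator_mem_commutator hu (mem_top x)) _)
  have hpow (j : ℕ) : ∀ e ∈ K, ∃ c ∈ K, ∃ s ∈ W, e = c ^ p ^ j * s := by
    induction j with
    | zero => exact fun e he => ⟨e, he, 1, one_mem W, by simp⟩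
    | succ j ih =>
      intro e he
      obtain ⟨c, hc, s, hs, rfl⟩ := ih e he
      obtain ⟨c', hc', s', hs', rfl⟩ :=
        exists_eq_pow_mul_of_mem_sPow (hmulpow p) (h.symm ▸ hc : c ∈ sPow K p)
      obtain ⟨s'', hs'', hcs⟩ := hmulpow (p ^ j) _ (pow_mem hc' p) s' (hWK hs')
      refine ⟨c', hc', s' ^ p ^ j * s'' * s, mul_mem (mul_mem (pow_mem hs' _) hs'') hs, ?_⟩
      rw [hcs, ← pow_mul, ← pow_succ']
      group
  refine hG.eq_bot_of_le_commutator_top hp fun e he => ?_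
  have := Fact.mk hp
  obtain ⟨n, hn⟩ := hG.exists_card_eq
  obtain ⟨c, -, s, hs, rfl⟩ := hpow n e he
  rwa [← hn, pow_card_eq_one', one_mul]

end IsPGroup

theorem commutator_sPow_mul_eq_bot {G : Type*} [Group G] {N B : Subgroup G} {k n : ℕ}
    (hc : ⁅sPow N k, B⁆ ≤ center G) (hn : ∀ z ∈ ⁅sPow N k, B⁆, z ^ n = 1) :
    ⁅sPow N (k * n), B⁆ = ⊥ := by
  refine le_bot_iff.mp (commutator_sPow_le fun y hy b hb => ?_)
  have hyb : ⁅y ^ k, b⁆ ∈ ⁅sPow N k, B⁆ := commutator_mem_commutator (pow_mem_sPow hy k) hb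
  have hz : ⁅y ^ k, ⁅y ^ k, b⁆⁆ = 1 :=
    commutatorElement_eq_one_iff_commute.mpr ((hc hyb).comm _).symm
  rw [pow_mul, commutatorElement_pow_left_of_commute (hz ▸ Commute.one_left _)
    (hz ▸ Commute.one_left _), hz, one_pow, hn _ hyb, one_mul, mem_bot]

namespace PowerfullyEmbedded

variable {p : ℕ} {G : Type*} [Group G] {K : Subgroup G}

theorem commutator_le_sPow_left (hK : PowerfullyEmbedded p K) (H : Subgroup G) :
    ⁅K, H⁆ ≤ sPow K (if p = 2 then 4 else p) :=
  (commutator_mono le_rfl le_top).trans hK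

theorem commutator_le_sPow_right (hK : PowerfullyEmbedded p K) (H : Subgroup G) :
    ⁅H, K⁆ ≤ sPow K (if p = 2 then 4 else p) :=
  (commutator_comm H K).le.trans (hK.commutator_le_sPow_left H)

theorem commutator_le_sPow (hK : PowerfullyEmbedded p K) : ⁅K, ⊤⁆ ≤ sPow K p :=
  hK.trans <| sPow_le_sPow_of_dvd <| by
    split_ifs with h
    · exact h ▸ ⟨2, rfl⟩
    · exact dvd_rfl

theorem commutatorElement_mem (hK : PowerfullyEmbedded p K) {x : G} (hx : x ∈ K) (g : G) :
    ⁅x, g⁆ ∈ sPow K p :=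
  hK.commutator_le_sPow (commutator_mem_commutator hx (mem_top g))

theorem commutatorElement_mem' (hK : PowerfullyEmbedded p K) (g : G) {x : G} (hx : x ∈ K) :
    ⁅g, x⁆ ∈ sPow K p :=
  commutatorElement_inv x g ▸ inv_mem (hK.commutatorElement_mem hx g)

theorem map {G' : Type*} [Group G'] {f : G →* G'} (hf : Function.Surjective f)
    (hK : PowerfullyEmbedded p K) : PowerfullyEmbedded p (K.map f) := by
  rw [PowerfullyEmbedded, ← map_top_of_surjective f hf, ← map_commutator, ← map_sPow]
  exact map_mono hK

theorem sPow_prime_of_commutator_le_center (hp : p.Prime) [K.Normal]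
    (hK : PowerfullyEmbedded p K)
    (hc : ⁅sPow K p, (⊤ : Subgroup G)⁆ ≤ center G)
    (hexp : ∀ z ∈ ⁅sPow K p, (⊤ : Subgroup G)⁆, z ^ p = 1) :
    PowerfullyEmbedded p (sPow K p) := by
  refine commutator_sPow_le fun x hx g _ => ?_
  have hxc : ⁅x, ⁅x, g⁆⁆ ∈ ⁅sPow K p, (⊤ : Subgroup G)⁆ :=
    (commutator_comm _ _).le (commutator_mem_commutator (mem_top x) (hK.commutatorElement_mem hx g))
  rw [commutatorElement_pow_left_of_commute ((hc hxc).comm _) ((hc hxc).comm _)]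
  obtain rfl | hp2 := eq_or_ne p 2
  · have hbot := commutator_sPow_mul_eq_bot (k := 2) hc hexp
    have hxg : ⁅x, g⁆ ∈ sPow K 4 := hK (commutator_mem_commutator hx (mem_top g))
    have hcentral : ∀ y ∈ sPow K 4, ∀ h, Commute y h := fun y hy h =>
      commutatorElement_eq_one_iff_commute.mp <|
        mem_bot.mp (hbot ▸ commutator_mem_commutator hy (mem_top h))
    rw [commutatorElement_eq_one_iff_commute.mpr (hcentral _ hxg x).symm, one_pow, one_mul]
    exact sPow_mul_le K 2 4
      (pow_mem_sPow_mul_of_commute (fun y hy h _ => hcentral y hy h) hxg 2)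
  · rw [if_neg hp2, pow_choose_two_eq_one hp hp2 (hexp _ hxc), one_mul]
    exact pow_mem_sPow (hK.commutatorElement_mem hx g) p

theorem sPow_prime (hp : p.Prime) {G : Type u} [Group G] [Finite G] (hG : IsPGroup p G)
    {N : Subgroup G} [hNn : N.Normal] (hN : PowerfullyEmbedded p N) :
    PowerfullyEmbedded p (sPow N p) := by
  refine Group.induction_on_quotients (P := fun G _ => IsPGroup p G → ∀ N : Subgroup G,
    N.Normal → PowerfullyEmbedded p N → PowerfullyEmbedded p (sPow N p)) ?_ G hG N hNn hN
  intro G _ _ ih hG N hNn hN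
  have hquot (W : Subgroup G) [W.Normal] (hW : W ≠ ⊥) :
      ⁅sPow N p, ⊤⁆ ≤ sPow (sPow N p) (if p = 2 then 4 else p) ⊔ W := by
    have hf := QuotientGroup.mk'_surjective W
    have := ih W hW (hG.to_quotient W) _ (hNn.map _ hf) (hN.map hf)
    rw [PowerfullyEmbedded, ← map_top_of_surjective _ hf, ← map_sPow, ← map_commutator,
      ← map_sPow] at this
    exact le_sup_of_map_mk'_le this
  obtain hT | hT := eq_or_ne (sPow (sPow N p) (if p = 2 then 4 else p)) ⊥
  · have hmin (W : Subgroup G) (_ : W.Normal) (hW : W ≠ ⊥) : ⁅sPow N p, ⊤⁆ ≤ W := by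
      simpa [hT] using hquot W hW
    exact sPow_prime_of_commutator_le_center hp hN (hG.le_center_of_forall_le hp hmin)
      fun z hz => hG.pow_eq_one_of_forall_le hp hmin hz
  · exact (hquot _ hT).trans_eq (sup_idem _)

end PowerfullyEmbedded

section Tower

variable {p : ℕ} {G : Type u} [Group G] {A : Subgroup G}

def sPowIter (A : Subgroup G) (p : ℕ) : ℕ → Subgroup G
  | 0 => A
  | d + 1 => sPow (sPowIter A p d) p

instance sPowIter_normal [hA : A.Normal] (d : ℕ) : (sPowIter A p d).Normal := by
  induction d with
  | zero => exact hA
  | succ _ _ => exact sPow_normal p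

theorem sPowIter_antitone : Antitone (sPowIter A p) :=
  antitone_nat_of_succ_le fun _ => sPow_le_self _ p

theorem sPowIter_add (A : Subgroup G) (d e : ℕ) :
    sPowIter (sPowIter A p d) p e = sPowIter A p (d + e) := by
  induction e with
  | zero => rfl
  | succ e ih => rw [← add_assoc, sPowIter, ih, sPowIter]

theorem pow_mem_sPowIter {x : G} (hx : x ∈ A) (d : ℕ) : x ^ p ^ d ∈ sPowIter A p d := by
  induction d with
  | zero => rwa [pow_zero, pow_one]
  | succ d ih => rw [pow_succ, pow_mul]; exact pow_mem_sPow ih p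

variable [Finite G] [A.Normal]

theorem exists_sPowIter_eq_bot (hp : p.Prime) (hG : IsPGroup p G) : ∃ m, sPowIter A p m = ⊥ := by
  obtain ⟨d, e, hne, hde⟩ := Finite.exists_ne_map_eq_of_infinite (sPowIter A p)
  wlog hlt : d < e generalizing d e
  · exact this e d hne.symm hde.symm (hne.lt_or_gt.resolve_left hlt)
  have hstable : sPow (sPowIter A p d) p = sPowIter A p d :=
    le_antisymm (sPow_le_self _ p) (hde.le.trans (sPowIter_antitone hlt))
  exact ⟨d, hG.eq_bot_of_sPow_eq_self hp hstable⟩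

theorem powerfullyEmbedded_sPowIter (hp : p.Prime) (hG : IsPGroup p G)
    (hA : PowerfullyEmbedded p A) (d : ℕ) : PowerfullyEmbedded p (sPowIter A p d) := by
  induction d with
  | zero => exact hA
  | succ d ih => exact ih.sPow_prime hp hG

theorem exists_mul_pow_eq_mul_of_mem_sPowIter (hp : p.Prime) (hG : IsPGroup p G)
    (hA : PowerfullyEmbedded p A) (x : G) {e : ℕ} {u : G} (hu : u ∈ sPowIter A p e) :
    ∃ s ∈ sPowIter A p (e + 2), (x * u) ^ p = x ^ p * u ^ p * s := by
  obtain rfl | hp2 := eq_or_ne p 2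
  · have hux : ⁅u, x⁆ ∈ sPowIter A 2 (e + 2) :=
      sPow_mul_le _ 2 2
        (powerfullyEmbedded_sPowIter hp hG hA e (commutator_mem_commutator hu (mem_top x)))
    refine exists_mul_pow_eq_mul_of_commutatorElement_mem 2 (fun g => ?_) (by simpa using hux)
    exact commutator_le_left _ ⊤ (commutator_mem_commutator hux (mem_top g))
  · have hux := (powerfullyEmbedded_sPowIter hp hG hA e).commutatorElement_mem hu x
    exact exists_mul_pow_eq_mul_of_commutatorElement_mem p
      ((powerfullyEmbedded_sPowIter hp hG hA (e + 1)).commutatorElement_mem hux)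
      (pow_choose_two_mem hp hp2 (pow_mem_sPow hux p))

/-- The error term of `exists_eq_pow_mul_of_mem_sPow` is pushed down the series until it
reaches `⊥`. -/
theorem exists_eq_pow_of_mem_sPowIter_succ (hp : p.Prime) (hG : IsPGroup p G)
    (hA : PowerfullyEmbedded p A) {d : ℕ} {c : G} (hc : c ∈ sPowIter A p (d + 1)) :
    ∃ y ∈ sPowIter A p d, c = y ^ p := by
  have hdecomp {k : ℕ} {t : G} (ht : t ∈ sPowIter A p (k + 1)) :
      ∃ u ∈ sPowIter A p k, ∃ s ∈ sPowIter A p (k + 2), t = u ^ p * s :=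
    exists_eq_pow_mul_of_mem_sPow
      (fun u _ _ hv => exists_mul_pow_eq_mul_of_mem_sPowIter hp hG hA u hv) ht
  have hiter (j : ℕ) :
      ∃ y ∈ sPowIter A p d, ∃ t ∈ sPowIter A p (d + 2 + j), c = y ^ p * t := by
    induction j with
    | zero => exact hdecomp hc
    | succ j ih =>
      obtain ⟨y, hy, t, ht, rfl⟩ := ih
      obtain ⟨u, hu, s, hs, rfl⟩ := hdecomp (k := d + 1 + j) (by rwa [add_right_comm])
      obtain ⟨s', hs', hyu⟩ := exists_mul_pow_eq_mul_of_mem_sPowIter hp hG hA y hu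
      refine ⟨y * u, mul_mem hy (sPowIter_antitone (by omega) hu), s'⁻¹ * s, ?_, ?_⟩
      · rw [show d + 2 + (j + 1) = d + 1 + j + 2 by omega]
        exact mul_mem (inv_mem hs') hs
      · rw [hyu]; group
  obtain ⟨m, hm⟩ := exists_sPowIter_eq_bot (A := A) hp hG
  obtain ⟨y, hy, t, ht, rfl⟩ := hiter m
  have ht1 : t = 1 := mem_bot.mp (hm ▸ sPowIter_antitone (by omega) ht)
  exact ⟨y, hy, by rw [ht1, mul_one]⟩

theorem sPowIter_eq_sPow (hp : p.Prime) (hG : IsPGroup p G) (hA : PowerfullyEmbedded p A)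
    (d : ℕ) : sPowIter A p d = sPow A (p ^ d) := by
  have hpow (d : ℕ) : ∀ c ∈ sPowIter A p d, ∃ x ∈ A, c = x ^ p ^ d := by
    induction d with
    | zero => exact fun c hc => ⟨c, hc, by rw [pow_zero, pow_one]⟩
    | succ d ih =>
      intro c hc
      obtain ⟨y, hy, rfl⟩ := exists_eq_pow_of_mem_sPowIter_succ hp hG hA hc
      obtain ⟨x, hx, rfl⟩ := ih y hy
      exact ⟨x, hx, by rw [← pow_mul, ← pow_succ]⟩
  refine le_antisymm (fun c hc => ?_) (sPow_le fun x hx => pow_mem_sPowIter hx d)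
  obtain ⟨x, hx, rfl⟩ := hpow d c hc
  exact pow_mem_sPow hx _

namespace PowerfullyEmbedded

theorem sPow_prime_pow (hp : p.Prime) (hG : IsPGroup p G) (hA : PowerfullyEmbedded p A)
    (i : ℕ) : PowerfullyEmbedded p (sPow A (p ^ i)) :=
  sPowIter_eq_sPow hp hG hA i ▸ powerfullyEmbedded_sPowIter hp hG hA i

theorem sPow_sPow_prime_pow (hp : p.Prime) (hG : IsPGroup p G) (hA : PowerfullyEmbedded p A)
    (i j : ℕ) : sPow (sPow A (p ^ i)) (p ^ j) = sPow A (p ^ (i + j)) := by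
  rw [← sPowIter_eq_sPow hp hG hA i,
    ← sPowIter_eq_sPow hp hG (powerfullyEmbedded_sPowIter hp hG hA i) j, sPowIter_add,
    sPowIter_eq_sPow hp hG hA]

end PowerfullyEmbedded

end Tower

section Commutators

variable {p : ℕ}

theorem commutator_sPow_prime_le_of_le_center {G : Type*} [Group G] (hp : p.Prime)
    {M N : Subgroup G} [M.Normal] [N.Normal] (hM : PowerfullyEmbedded p M)
    (hc : ⁅sPow M p, N⁆ ≤ center G) (hexp : ∀ z ∈ ⁅sPow M p, N⁆, z ^ p = 1) :
    ⁅sPow N p, M⁆ ≤ sPow ⁅N, M⁆ p := by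
  refine commutator_sPow_le fun x hx m hm => ?_
  have hz : ⁅x, ⁅x, m⁆⁆ ∈ ⁅sPow M p, N⁆ :=
    (commutator_comm _ _).le (commutator_mem_commutator hx (hM.commutatorElement_mem' x hm))
  have hz1 : ⁅x, ⁅x, m⁆⁆ ^ p.choose 2 = 1 := by
    obtain rfl | hp2 := eq_or_ne p 2
    · have hxm : ⁅x, m⁆ ∈ sPow M 4 :=
        hM.commutator_le_sPow_right N (commutator_mem_commutator hx hm)
      have hz4 : ⁅x, ⁅x, m⁆⁆ ∈ ⁅sPow M (2 * 2), N⁆ :=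
        (commutator_comm _ _).le (commutator_mem_commutator hx hxm)
      rw [commutator_sPow_mul_eq_bot hc hexp, mem_bot] at hz4
      rw [hz4, one_pow]
    · exact pow_choose_two_eq_one hp hp2 (hexp _ hz)
  rw [commutatorElement_pow_left_of_commute ((hc hz).comm _) ((hc hz).comm _), hz1, one_mul]
  exact pow_mem_sPow (commutator_mem_commutator hx hm) p

variable {G : Type u} [Group G] [Finite G]

theorem commutator_sPow_prime_le (hp : p.Prime) (hG : IsPGroup p G) {M N : Subgroup G}
    [hMn : M.Normal] [hNn : N.Normal] (hM : PowerfullyEmbedded p M)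
    (hN : PowerfullyEmbedded p N) : ⁅sPow N p, M⁆ ≤ sPow ⁅N, M⁆ p := by
  refine Group.induction_on_quotients (P := fun G _ => IsPGroup p G → ∀ M N : Subgroup G,
    M.Normal → N.Normal → PowerfullyEmbedded p M → PowerfullyEmbedded p N →
    ⁅sPow N p, M⁆ ≤ sPow ⁅N, M⁆ p) ?_ G hG M N hMn hNn hM hN
  intro G _ _ ih hG M N _ _ hM hN
  have hquot (M N : Subgroup G) [M.Normal] [N.Normal] (hM : PowerfullyEmbedded p M)
      (hN : PowerfullyEmbedded p N) (W : Subgroup G) [W.Normal] (hW : W ≠ ⊥) :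
      ⁅sPow N p, M⁆ ≤ sPow ⁅N, M⁆ p ⊔ W := by
    have hf := QuotientGroup.mk'_surjective W
    have := ih W hW (hG.to_quotient W) _ _ (.map ‹_› _ hf) (.map ‹_› _ hf) (hM.map hf) (hN.map hf)
    rw [← map_sPow, ← map_commutator, ← map_commutator, ← map_sPow] at this
    exact le_sup_of_map_mk'_le this
  obtain hT | hT := eq_or_ne (sPow ⁅N, M⁆ p) ⊥
  · have hmin (W : Subgroup G) (_ : W.Normal) (hW : W ≠ ⊥) : ⁅sPow M p, N⁆ ≤ W := by
      simpa [commutator_comm M N, hT] using hquot N M hN hM W hW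
    exact commutator_sPow_prime_le_of_le_center hp hM (hG.le_center_of_forall_le hp hmin)
      fun z hz => hG.pow_eq_one_of_forall_le hp hmin hz
  · exact (hquot M N hM hN _ hT).trans_eq (sup_idem _)

theorem sPow_prime_commutator_eq_bot_of_le_center (hp : p.Prime) (hG : IsPGroup p G)
    {M N : Subgroup G} [M.Normal] [N.Normal] (hM : PowerfullyEmbedded p M)
    (hN : PowerfullyEmbedded p N) (hR : ⁅sPow N p, M⁆ = ⊥) (hc : sPow ⁅N, M⁆ p ≤ center G)
    (hexp : ∀ z ∈ sPow ⁅N, M⁆ p, z ^ p = 1) : sPow ⁅N, M⁆ p = ⊥ := by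
  have hR1 {a b : G} (ha : a ∈ sPow N p) (hb : b ∈ M) : ⁅a, b⁆ = 1 :=
    mem_bot.mp (hR ▸ commutator_mem_commutator ha hb)
  have hcomm {a b : G} (ha : a ∈ ⁅N, M⁆) (hb : b ∈ ⁅N, M⁆) : Commute a b :=
    commutatorElement_eq_one_iff_commute.mp <|
      hR1 (hN.commutator_le_sPow (commutator_mono le_rfl le_top ha)) (commutator_le_right N M hb)
  have hgen {x m : G} (hx : x ∈ N) (hm : m ∈ M) : ⁅x, m⁆ ^ p = 1 := by
    obtain ⟨hzL, hz1⟩ : ⁅x, ⁅x, m⁆⁆ ∈ sPow ⁅N, M⁆ p ∧ ⁅x, ⁅x, m⁆⁆ ^ p.choose 2 = 1 := by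
      obtain rfl | hp2 := eq_or_ne p 2
      · have hxm : ⁅x, m⁆ ∈ sPow M (2 * 2) :=
          hM.commutator_le_sPow_right N (commutator_mem_commutator hx hm)
        have hz : ⁅x, ⁅x, m⁆⁆ ∈ sPow (sPow ⁅N, M⁆ 2) 2 := by
          refine (commutator_comm M N ▸ sPow_mono (commutator_sPow_prime_le hp hG hN hM) 2)
            (commutator_sPow_prime_le hp hG hN (hM.sPow_prime hp hG)
              (commutator_mono (sPow_mul_le M 2 2) le_rfl ?_))
          exact (commutator_comm N _).le (commutator_mem_commutator hx hxm)
        refine ⟨sPow_le_self _ 2 hz, ?_⟩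
        rw [Nat.choose_self, pow_one]
        exact mem_bot.mp (sPow_le (fun y hy => mem_bot.mpr (hexp y hy)) hz)
      · have hz : ⁅x, ⁅x, m⁆⁆ ∈ sPow ⁅N, M⁆ p := commutator_comm M N ▸
          commutator_sPow_prime_le hp hG hN hM
            ((commutator_comm N _).le
              (commutator_mem_commutator hx (hM.commutatorElement_mem' x hm)))
        exact ⟨hz, pow_choose_two_eq_one hp hp2 (hexp _ hz)⟩
    have h := commutatorElement_pow_left_of_commute ((hc hzL).comm x) ((hc hzL).comm ⁅x, m⁆) p
    rwa [hR1 (pow_mem_sPow hx p) hm, hz1, one_mul, eq_comm] at h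
  refine le_bot_iff.mp (sPow_le fun c hcNM => mem_bot.mpr ?_)
  rw [Subgroup.commutator_def] at hcNM
  induction hcNM using closure_induction with
  | mem _ hy => obtain ⟨x, hx, m, hm, rfl⟩ := hy; exact hgen hx hm
  | one => exact one_pow p
  | mul a b ha hb hap hbp =>
    rw [← Subgroup.commutator_def] at ha hb
    rw [(hcomm ha hb).mul_pow, hap, hbp, one_mul]
  | inv a _ hap => rw [inv_pow, hap, inv_one]

theorem sPow_prime_commutator_le (hp : p.Prime) (hG : IsPGroup p G) {M N : Subgroup G}
    [hMn : M.Normal] [hNn : N.Normal] (hM : PowerfullyEmbedded p M)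
    (hN : PowerfullyEmbedded p N) : sPow ⁅N, M⁆ p ≤ ⁅sPow N p, M⁆ := by
  refine Group.induction_on_quotients (P := fun G _ => IsPGroup p G → ∀ M N : Subgroup G,
    M.Normal → N.Normal → PowerfullyEmbedded p M → PowerfullyEmbedded p N →
    sPow ⁅N, M⁆ p ≤ ⁅sPow N p, M⁆) ?_ G hG M N hMn hNn hM hN
  intro G _ _ ih hG M N hMn hNn hM hN
  have hquot (W : Subgroup G) [W.Normal] (hW : W ≠ ⊥) : sPow ⁅N, M⁆ p ≤ ⁅sPow N p, M⁆ ⊔ W := by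
    have hf := QuotientGroup.mk'_surjective W
    have := ih W hW (hG.to_quotient W) _ _ (hMn.map _ hf) (hNn.map _ hf) (hM.map hf) (hN.map hf)
    rw [← map_sPow, ← map_commutator, ← map_commutator, ← map_sPow] at this
    exact le_sup_of_map_mk'_le this
  obtain hR | hR := eq_or_ne ⁅sPow N p, M⁆ ⊥
  · have hmin (W : Subgroup G) (_ : W.Normal) (hW : W ≠ ⊥) : sPow ⁅N, M⁆ p ≤ W := by
      simpa [hR] using hquot W hW
    rw [sPow_prime_commutator_eq_bot_of_le_center hp hG hM hN hR
      (hG.le_center_of_forall_le hp hmin) fun z hz => hG.pow_eq_one_of_forall_le hp hmin hz]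
    exact bot_le
  · exact (hquot _ hR).trans_eq (sup_idem _)

theorem commutator_sPow_prime_eq (hp : p.Prime) (hG : IsPGroup p G) {M N : Subgroup G}
    [M.Normal] [N.Normal] (hM : PowerfullyEmbedded p M) (hN : PowerfullyEmbedded p N) :
    ⁅sPow N p, M⁆ = sPow ⁅N, M⁆ p :=
  le_antisymm (commutator_sPow_prime_le hp hG hM hN) (sPow_prime_commutator_le hp hG hM hN)

theorem commutator_sPow_four_eq_bot_of_le_center (hG : IsPGroup 2 G) {M N : Subgroup G}
    [M.Normal] [N.Normal] (hM : PowerfullyEmbedded 2 M) (hN : PowerfullyEmbedded 2 N)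
    (hT : sPow ⁅N, M⁆ 4 = ⊥) (hK : ⁅sPow N 4, M⁆ ≤ center G)
    (hKexp : ∀ z ∈ ⁅sPow N 4, M⁆, z ^ 2 = 1) (hK' : ⁅sPow M 4, N⁆ ≤ center G)
    (hK'exp : ∀ z ∈ ⁅sPow M 4, N⁆, z ^ 2 = 1) : ⁅sPow N 4, M⁆ = ⊥ := by
  have hdecomp {e : G} (he : e ∈ sPow ⁅N, M⁆ 2) :
      ∃ c ∈ ⁅N, M⁆, ∃ κ ∈ ⁅sPow N 4, M⁆, e = c ^ 2 * κ := by
    refine exists_eq_pow_mul_of_mem_sPow (fun u hu v hv => ?_) he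
    have hvu : ⁅v, u⁆ ∈ ⁅sPow N 4, M⁆ :=
      commutator_mem_commutator (hN.commutator_le_sPow_left M hv) (commutator_le_right N M hu)
    exact exists_mul_pow_eq_mul_of_commutatorElement_mem 2
      (fun g => commutator_le_left _ ⊤ (commutator_mem_commutator hvu (mem_top g)))
      (by simpa using hvu)
  have hsq {e : G} (he : e ∈ sPow ⁅N, M⁆ 2) : e ^ 2 = 1 := by
    obtain ⟨c, hc, κ, hκ, rfl⟩ := hdecomp he
    have hc4 : c ^ 4 = 1 := mem_bot.mp (hT ▸ pow_mem_sPow hc 4)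
    rw [((hK hκ).comm _).symm.mul_pow, ← pow_mul, hc4, hKexp κ hκ, one_mul]
  refine le_bot_iff.mp (commutator_sPow_le fun x hx m hm => mem_bot.mpr ?_)
  have hc' : ⁅x ^ 2, m⁆ ∈ sPow ⁅N, M⁆ 2 := commutator_sPow_prime_eq Nat.prime_two hG hM hN ▸
    commutator_mem_commutator (pow_mem_sPow hx 2) hm
  have hz' : ⁅x ^ 2, ⁅x ^ 2, m⁆⁆ = 1 := by
    obtain ⟨c, hc, κ, hκ, hcκ⟩ := hdecomp hc'
    have hu : ⁅x ^ 2, c⁆ ∈ ⁅sPow M 4, N⁆ :=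
      (commutator_comm _ _).le
        (commutator_mem_commutator (pow_mem hx 2) (hM.commutator_le_sPow_right N hc))
    rw [hcκ, commutatorElement_mul_right_of_commute ((hK hκ).comm _),
      commutatorElement_pow_right_of_commute ((hK' hu).comm c), hK'exp _ hu]
  rw [show x ^ 4 = (x ^ 2) ^ 2 by rw [← pow_mul], commutatorElement_pow_left_of_commute
    (hz' ▸ Commute.one_left _) (hz' ▸ Commute.one_left _), hz', hsq hc', one_pow, one_mul]

theorem commutator_sPow_four_le (hG : IsPGroup 2 G) {M N : Subgroup G} [hMn : M.Normal]
    [hNn : N.Normal] (hM : PowerfullyEmbedded 2 M) (hN : PowerfullyEmbedded 2 N) :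
    ⁅sPow N 4, M⁆ ≤ sPow ⁅N, M⁆ 4 := by
  refine Group.induction_on_quotients (P := fun G _ => IsPGroup 2 G → ∀ M N : Subgroup G,
    M.Normal → N.Normal → PowerfullyEmbedded 2 M → PowerfullyEmbedded 2 N →
    ⁅sPow N 4, M⁆ ≤ sPow ⁅N, M⁆ 4) ?_ G hG M N hMn hNn hM hN
  intro G _ _ ih hG M N _ _ hM hN
  have hquot (M N : Subgroup G) [M.Normal] [N.Normal] (hM : PowerfullyEmbedded 2 M)
      (hN : PowerfullyEmbedded 2 N) (W : Subgroup G) [W.Normal] (hW : W ≠ ⊥) :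
      ⁅sPow N 4, M⁆ ≤ sPow ⁅N, M⁆ 4 ⊔ W := by
    have hf := QuotientGroup.mk'_surjective W
    have := ih W hW (hG.to_quotient W) _ _ (.map ‹_› _ hf) (.map ‹_› _ hf) (hM.map hf) (hN.map hf)
    rw [← map_sPow, ← map_commutator, ← map_commutator, ← map_sPow] at this
    exact le_sup_of_map_mk'_le this
  obtain hT | hT := eq_or_ne (sPow ⁅N, M⁆ 4) ⊥
  · have hmin (W : Subgroup G) (_ : W.Normal) (hW : W ≠ ⊥) : ⁅sPow N 4, M⁆ ≤ W := by
      simpa [hT] using hquot M N hM hN W hW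
    have hmin' (W : Subgroup G) (_ : W.Normal) (hW : W ≠ ⊥) : ⁅sPow M 4, N⁆ ≤ W := by
      simpa [commutator_comm M N, hT] using hquot N M hN hM W hW
    rw [commutator_sPow_four_eq_bot_of_le_center hG hM hN hT
      (hG.le_center_of_forall_le Nat.prime_two hmin)
      (fun z hz => hG.pow_eq_one_of_forall_le Nat.prime_two hmin hz)
      (hG.le_center_of_forall_le Nat.prime_two hmin')
      (fun z hz => hG.pow_eq_one_of_forall_le Nat.prime_two hmin' hz)]
    exact bot_le
  · exact (hquot M N hM hN _ hT).trans_eq (sup_idem _)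

theorem PowerfullyEmbedded.commutator (hp : p.Prime) (hG : IsPGroup p G) {M N : Subgroup G}
    [M.Normal] [N.Normal] (hM : PowerfullyEmbedded p M) (hN : PowerfullyEmbedded p N) :
    PowerfullyEmbedded p ⁅N, M⁆ := by
  have key (A B : Subgroup G) [A.Normal] [B.Normal] (hA : PowerfullyEmbedded p A)
      (hB : PowerfullyEmbedded p B) :
      ⁅⁅A, (⊤ : Subgroup G)⁆, B⁆ ≤ sPow ⁅A, B⁆ (if p = 2 then 4 else p) := by
    refine (commutator_mono hA le_rfl).trans ?_
    obtain rfl | hp2 := eq_or_ne p 2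
    · exact commutator_sPow_four_le hG hB hA
    · simpa only [if_neg hp2] using commutator_sPow_prime_le hp hG hB hA
  refine commutator_commutator_le_of_rotate ?_ ?_
  · rw [commutator_comm N M]
    exact key M N hM hN
  · rw [commutator_comm ⊤ N]
    exact key N M hN hM

theorem commutator_sPow_prime_pow_eq (hp : p.Prime) (hG : IsPGroup p G) {M N : Subgroup G}
    [M.Normal] [N.Normal] (hM : PowerfullyEmbedded p M) (hN : PowerfullyEmbedded p N) (k : ℕ) :
    ⁅sPow N (p ^ k), M⁆ = sPow ⁅N, M⁆ (p ^ k) := by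
  induction k with
  | zero => simp only [pow_zero, sPow_one]
  | succ k ih =>
    have hsucc {A : Subgroup G} [A.Normal] (hA : PowerfullyEmbedded p A) :
        sPow (sPow A (p ^ k)) p = sPow A (p ^ (k + 1)) := by
      simpa using hA.sPow_sPow_prime_pow hp hG k 1
    rw [← hsucc hN, commutator_sPow_prime_eq hp hG hM (hN.sPow_prime_pow hp hG k), ih,
      hsucc (hM.commutator hp hG hN)]

end Commutators

theorem stmt_5 {p : ℕ} (hp : p.Prime)
    {G : Type*} [Group G] [Finite G] (hG : IsPGroup p G)
    (M N : Subgroup G) (hM : M.Normal) (hN : N.Normal)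
    (hMe : PowerfullyEmbedded p M) (hNe : PowerfullyEmbedded p N)
    (i j : ℕ) :
    ⁅sPow N (p ^ i), sPow M (p ^ j)⁆ = sPow ⁅N, M⁆ (p ^ (i + j)) := by
  calc ⁅sPow N (p ^ i), sPow M (p ^ j)⁆ = ⁅sPow M (p ^ j), sPow N (p ^ i)⁆ := commutator_comm _ _
    _ = sPow ⁅M, sPow N (p ^ i)⁆ (p ^ j) :=
      commutator_sPow_prime_pow_eq hp hG (hNe.sPow_prime_pow hp hG i) hMe j
    _ = sPow (sPow ⁅N, M⁆ (p ^ i)) (p ^ j) := by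
      rw [commutator_comm, commutator_sPow_prime_pow_eq hp hG hMe hNe i]
    _ = sPow ⁅N, M⁆ (p ^ (i + j)) := (hMe.commutator hp hG hNe).sPow_sPow_prime_pow hp hG i j
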